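/- Let C be a simplicial complex and v a vertex of C, and m ≥ 0. Then the deletion of v from the m-th derived subdivision reduces by non-evasiveness steps to the m-th derived subdivision of the deletion: (sd^m C) − v ↘_NE sd^m(C − v). Consequently, if sd^m Lk(v,C) is non-evasive, then sd^m C ↘_NE sd^m(C − v). -/

import Mathlib

/-- An (abstract, finite) simplicial complex on the vertex set `ℕ`. -/
def IsComplex (C : Finset (Finset ℕ)) : Prop :=
  ∀ σ ∈ C, σ.Nonempty ∧ ∀ τ ⊆ σ, τ.Nonempty → τ ∈ C

/-- The link of a vertex `v` in `C`. -/
def lkv (v : ℕ) (C : Finset (Finset ℕ)) : Finset (Finset ℕ) :=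
  C.filter fun σ => v ∉ σ ∧ insert v σ ∈ C

/-- The deletion of a vertex `v` from `C`. -/
def delv (v : ℕ) (C : Finset (Finset ℕ)) : Finset (Finset ℕ) :=
  C.filter fun σ => v ∉ σ

/-- Non-evasiveness, defined recursively. -/
inductive NonEvasive : Finset (Finset ℕ) → Prop
  | point (v : ℕ) : NonEvasive {({v} : Finset ℕ)}
  | step (C : Finset (Finset ℕ)) (v : ℕ) (hv : ({v} : Finset ℕ) ∈ C)
      (hlk : NonEvasive (lkv v C)) (hdel : NonEvasive (delv v C)) : NonEvasive C

/-- A fixed injective encoding of finite sets of naturals by naturals. -/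
def fenc : Finset ℕ → ℕ := fun s => Encodable.encode s

/-- The derived (barycentric) subdivision: vertices of `sd C` correspond to the faces of `C`,
and faces of `sd C` correspond to chains of faces of `C` under inclusion. -/
def sd (C : Finset (Finset ℕ)) : Finset (Finset ℕ) :=
  (C.powerset.filter fun S => S.Nonempty ∧ ∀ σ ∈ S, ∀ τ ∈ S, σ ⊆ τ ∨ τ ⊆ σ).image
    fun S => S.image fenc

/-- A non-evasiveness step: deletion of a vertex whose link is non-evasive. -/
def NEStep (C C' : Finset (Finset ℕ)) : Prop :=
  ∃ v : ℕ, ({v} : Finset ℕ) ∈ C ∧ NonEvasive (lkv v C) ∧ C' = delv v C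

/-- `C ↘_NE C'` : reduction by non-evasiveness steps. -/
def NERed : Finset (Finset ℕ) → Finset (Finset ℕ) → Prop :=
  Relation.ReflTransGen NEStep

/-- The vertex of `sd^[m] C` corresponding to a vertex `v` of `C`. -/
def vIter : ℕ → ℕ → ℕ
  | 0, v => v
  | m + 1, v => fenc {vIter m v}

/-!
Deleting the vertex `{v}` from `sd C` leaves the subdivision of the face poset of `C` without `{v}`.
The faces of `C` strictly containing `v` can then be removed one at a time, smallest first: such a
face `σ` has `σ \ {v}` as its only maximal proper face still present, so the link of `σ` in the
subdivision is a cone with apex `σ \ {v}`, and cones are non-evasive. Hence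
`sd C − v ↘_NE sd (C − v)`. The link of `{v}` in `sd C` is isomorphic to `sd Lk(v, C)`, so `sd`
preserves non-evasiveness and therefore non-evasive reductions, and by induction on `m`
`sd^(m+1) C − v ↘_NE sd (sd^m C − v) ↘_NE sd^(m+1) (C − v)`. Finally the link of `v` in `sd^m C`
is isomorphic to `sd^m Lk(v, C)`, so when the latter is non-evasive, deleting `v` is one more step.
-/

open Finset

section Complexes

variable {C : Finset (Finset ℕ)} {v : ℕ}

theorem IsComplex.singleton_mem (hC : IsComplex C) {σ : Finset ℕ} (hσ : σ ∈ C) (hv : v ∈ σ) :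
    {v} ∈ C :=
  (hC σ hσ).2 {v} (singleton_subset_iff.2 hv) (singleton_nonempty v)

theorem IsComplex.delv (hC : IsComplex C) (v : ℕ) : IsComplex (delv v C) := by
  intro σ hσ
  obtain ⟨hσC, hvσ⟩ := mem_filter.1 hσ
  exact ⟨(hC σ hσC).1, fun τ hτ hτne =>
    mem_filter.2 ⟨(hC σ hσC).2 τ hτ hτne, fun h => hvσ (hτ h)⟩⟩

theorem IsComplex.lkv (hC : IsComplex C) (v : ℕ) : IsComplex (lkv v C) := by
  intro σ hσ
  obtain ⟨hσC, hvσ, hins⟩ := mem_filter.1 hσ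
  refine ⟨(hC σ hσC).1, fun τ hτ hτne =>
    mem_filter.2 ⟨(hC σ hσC).2 τ hτ hτne, fun h => hvσ (hτ h), ?_⟩⟩
  exact (hC _ hins).2 _ (insert_subset_insert v hτ) (insert_nonempty v τ)

theorem lkv_subset_delv : lkv v C ⊆ delv v C :=
  fun _ hσ => mem_filter.2 ⟨(mem_filter.1 hσ).1, (mem_filter.1 hσ).2.1⟩

theorem delv_ssubset (hv : {v} ∈ C) : delv v C ⊂ C := by
  refine ssubset_of_subset_of_ne (filter_subset _ _) fun h => ?_
  rw [← h] at hv
  exact (mem_filter.1 hv).2 (mem_singleton_self v)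

theorem singleton_mem_of_lkv_nonempty (hC : IsComplex C) (h : (lkv v C).Nonempty) : {v} ∈ C := by
  obtain ⟨σ, hσ⟩ := h
  exact hC.singleton_mem (mem_filter.1 hσ).2.2 (mem_insert_self v σ)

end Complexes

def IsCone (a : ℕ) (C : Finset (Finset ℕ)) : Prop :=
  {a} ∈ C ∧ ∀ σ ∈ C, insert a σ ∈ C

section Cones

variable {C : Finset (Finset ℕ)} {a w : ℕ}

theorem IsCone.delv (h : IsCone a C) (hw : w ≠ a) : IsCone a (delv w C) := by
  refine ⟨mem_filter.2 ⟨h.1, by simpa using hw⟩, fun σ hσ => ?_⟩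
  obtain ⟨hσC, hwσ⟩ := mem_filter.1 hσ
  exact mem_filter.2 ⟨h.2 σ hσC, by simp [hw, hwσ]⟩

theorem IsCone.lkv (h : IsCone a C) (hw : w ≠ a) (hwC : {w} ∈ C) : IsCone a (lkv w C) := by
  refine ⟨mem_filter.2 ⟨h.1, by simpa using hw, ?_⟩, fun σ hσ => ?_⟩
  · rw [pair_comm]
    exact h.2 {w} hwC
  · obtain ⟨hσC, hwσ, hins⟩ := mem_filter.1 hσ
    refine mem_filter.2 ⟨h.2 σ hσC, by simp [hw, hwσ], ?_⟩
    rw [insert_comm]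
    exact h.2 _ hins

theorem IsCone.nonEvasive (hC : IsComplex C) (h : IsCone a C) : NonEvasive C := by
  induction C using Finset.strongInduction with
  | H C ih =>
    by_cases hpt : C = {{a}}
    · exact hpt ▸ NonEvasive.point a
    obtain ⟨σ, hσ, hσa⟩ : ∃ σ ∈ C, σ ≠ {a} := by
      by_contra! hall
      exact hpt (eq_singleton_iff_unique_mem.2 ⟨h.1, hall⟩)
    obtain ⟨w, hwσ, hwa⟩ : ∃ w ∈ σ, w ≠ a := by
      by_contra! hall
      exact hσa (eq_singleton_iff_nonempty_unique_mem.2 ⟨(hC σ hσ).1, hall⟩)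
    have hwC := hC.singleton_mem hσ hwσ
    exact NonEvasive.step C w hwC
      (ih _ (lkv_subset_delv.trans_ssubset (delv_ssubset hwC)) (hC.lkv w) (h.lkv hwa hwC))
      (ih _ (delv_ssubset hwC) (hC.delv w) (h.delv hwa))

end Cones

theorem NonEvasive.nonempty {C : Finset (Finset ℕ)} (h : NonEvasive C) : C.Nonempty := by
  cases h with
  | point v => exact singleton_nonempty _
  | step C v hv _ _ => exact ⟨_, hv⟩

theorem NERed.nonEvasive {C C' : Finset (Finset ℕ)} (h : NERed C C') (hC' : NonEvasive C') :
    NonEvasive C := by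
  induction h using Relation.ReflTransGen.head_induction_on with
  | refl => exact hC'
  | head hstep _ ih =>
    obtain ⟨v, hv, hlk, rfl⟩ := hstep
    exact NonEvasive.step _ v hv hlk ih

theorem fenc_injective : Function.Injective fenc := Encodable.encode_injective

section Subdivision

variable {A : Finset (Finset ℕ)} {σ : Finset ℕ}

theorem mem_sd {T : Finset ℕ} :
    T ∈ sd A ↔ ∃ S ⊆ A, S.Nonempty ∧ IsChain (· ⊆ ·) (S : Set (Finset ℕ)) ∧ S.image fenc = T := by
  simp only [sd, mem_image, mem_filter, mem_powerset]
  refine exists_congr fun S => ?_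
  have : IsChain (· ⊆ ·) (S : Set (Finset ℕ)) ↔ ∀ σ ∈ S, ∀ τ ∈ S, σ ⊆ τ ∨ τ ⊆ σ :=
    ⟨fun h σ hσ τ hτ => h.total hσ hτ, fun h σ hσ τ hτ _ => h σ hσ τ hτ⟩
  rw [this, and_assoc, and_assoc]

theorem sd_empty : sd ∅ = ∅ := by
  simp [sd]

theorem singleton_fenc_mem_sd (hσ : σ ∈ A) : {fenc σ} ∈ sd A :=
  mem_sd.2 ⟨{σ}, singleton_subset_iff.2 hσ, singleton_nonempty σ, by simp, image_singleton _ _⟩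

theorem isComplex_sd (A : Finset (Finset ℕ)) : IsComplex (sd A) := by
  intro T hT
  obtain ⟨S, hSA, hne, hch, rfl⟩ := mem_sd.1 hT
  refine ⟨hne.image _, fun τ hτ hτne => ?_⟩
  obtain ⟨S', hS'S, rfl⟩ := subset_image_iff.1 hτ
  exact mem_sd.2 ⟨S', hS'S.trans hSA, hτne.of_image, hch.mono (coe_subset.2 hS'S), rfl⟩

theorem delv_fenc_sd : delv (fenc σ) (sd A) = sd (A.erase σ) := by
  ext T
  simp only [delv, mem_filter, mem_sd, subset_erase]
  constructor
  · rintro ⟨⟨S, hSA, hne, hch, rfl⟩, hσ⟩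
    exact ⟨S, ⟨hSA, fun h => hσ (mem_image_of_mem _ h)⟩, hne, hch, rfl⟩
  · rintro ⟨S, ⟨hSA, hσ⟩, hne, hch, rfl⟩
    refine ⟨⟨S, hSA, hne, hch, rfl⟩, fun h => ?_⟩
    obtain ⟨τ, hτ, hτσ⟩ := mem_image.1 h
    exact hσ (fenc_injective hτσ ▸ hτ)

theorem lkv_fenc_sd (hσ : σ ∈ A) :
    lkv (fenc σ) (sd A) = sd (A.filter fun τ => τ ≠ σ ∧ (τ ⊆ σ ∨ σ ⊆ τ)) := by
  ext T
  simp only [lkv, mem_filter, mem_sd]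
  constructor
  · rintro ⟨⟨S, hSA, hne, hch, rfl⟩, hσS, S', hS'A, -, hch', hS'⟩
    obtain rfl : S' = insert σ S := image_injective fenc_injective (by rw [hS', image_insert])
    refine ⟨S, fun τ hτ => mem_filter.2 ⟨hSA hτ, ?_, ?_⟩, hne, hch, rfl⟩
    · rintro rfl
      exact hσS (mem_image_of_mem _ hτ)
    · exact hch'.total (by simp [hτ]) (by simp)
  · rintro ⟨S, hSB, hne, hch, rfl⟩
    have hSA : S ⊆ A := hSB.trans (filter_subset _ _)
    refine ⟨⟨S, hSA, hne, hch, rfl⟩, fun h => ?_, insert σ S, insert_subset hσ hSA,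
      insert_nonempty σ S, ?_, image_insert _ _ _⟩
    · obtain ⟨τ, hτ, hτσ⟩ := mem_image.1 h
      exact (mem_filter.1 (hSB hτ)).2.1 (fenc_injective hτσ)
    · rw [coe_insert]
      exact hch.insert fun τ hτ _ => ((mem_filter.1 (hSB hτ)).2.2).symm

end Subdivision

theorem isCone_sd_of_forall_comparable {B : Finset (Finset ℕ)} {ρ : Finset ℕ} (hρ : ρ ∈ B)
    (h : ∀ τ ∈ B, τ ⊆ ρ ∨ ρ ⊆ τ) : IsCone (fenc ρ) (sd B) := by
  refine ⟨singleton_fenc_mem_sd hρ, fun T hT => ?_⟩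
  obtain ⟨S, hSB, hne, hch, rfl⟩ := mem_sd.1 hT
  refine mem_sd.2 ⟨insert ρ S, insert_subset hρ hSB, insert_nonempty ρ S, ?_, image_insert _ _ _⟩
  rw [coe_insert]
  exact hch.insert fun τ hτ _ => (h τ (hSB hτ)).symm

/-- The link of `fenc σ` in `sd A` is a cone with apex `fenc ρ`. -/
theorem neStep_sd_erase {A : Finset (Finset ℕ)} {σ ρ : Finset ℕ} (hσ : σ ∈ A) (hρ : ρ ∈ A)
    (hρσ : ρ ⊂ σ) (hmax : ∀ τ ∈ A, τ ⊂ σ → τ ⊆ ρ) : NEStep (sd A) (sd (A.erase σ)) := by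
  refine ⟨fenc σ, singleton_fenc_mem_sd hσ, ?_, delv_fenc_sd.symm⟩
  rw [lkv_fenc_sd hσ]
  have hρ' : ρ ∈ A.filter fun τ => τ ≠ σ ∧ (τ ⊆ σ ∨ σ ⊆ τ) :=
    mem_filter.2 ⟨hρ, hρσ.ne, Or.inl hρσ.subset⟩
  refine (isCone_sd_of_forall_comparable hρ' fun τ hτ => ?_).nonEvasive (isComplex_sd _)
  obtain ⟨hτA, hτσ, hsub | hsup⟩ := mem_filter.1 hτ
  · exact Or.inl (hmax τ hτA (ssubset_of_subset_of_ne hsub hτσ))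
  · exact Or.inr (hρσ.subset.trans hsup)

/-- The faces of `F` are removed in order of increasing size: each `σ ∈ F` then has `σ.erase v`
as its only maximal proper face left. -/
theorem neRed_sd_union {G F : Finset (Finset ℕ)} {v : ℕ} (hG : ∀ τ ∈ G, v ∉ τ)
    (hF : ∀ σ ∈ F, v ∈ σ ∧ σ.erase v ∈ G) : NERed (sd (G ∪ F)) (sd G) := by
  induction F using Finset.induction_on_min_value (α := ℕ) (ι := Finset ℕ) card with
  | empty => rw [union_empty]; exact .refl
  | insert σ F hσF hmin ih =>
    have ⟨hvσ, hρG⟩ := hF σ (mem_insert_self σ F)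
    have hσG : σ ∉ G := fun h => hG σ h hvσ
    have herase : (G ∪ insert σ F).erase σ = G ∪ F := by
      rw [erase_union_distrib, erase_eq_of_notMem hσG, erase_insert hσF]
    refine Relation.ReflTransGen.head ?_ (ih fun τ hτ => hF τ (mem_insert_of_mem hτ))
    rw [← herase]
    refine neStep_sd_erase (by simp) (mem_union_left _ hρG) (erase_ssubset hvσ) fun τ hτ hτσ => ?_
    rcases mem_union.1 hτ with hτG | hτF
    · exact subset_erase.2 ⟨hτσ.subset, hG τ hτG⟩
    · rcases mem_insert.1 hτF with rfl | hτF
      · exact absurd hτσ (lt_irrefl τ)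
      · exact absurd (hmin τ hτF) (not_le.2 (card_lt_card hτσ))

theorem neRed_delv_singleton_sd {C : Finset (Finset ℕ)} (hC : IsComplex C) (v : ℕ) :
    NERed (delv (fenc {v}) (sd C)) (sd (delv v C)) := by
  have hsplit : C.erase {v} = delv v C ∪ C.filter (fun σ => v ∈ σ ∧ σ ≠ {v}) := by
    ext σ
    by_cases h : v ∈ σ <;> by_cases h' : σ = {v} <;> simp [delv, h, h']
  rw [delv_fenc_sd, hsplit]
  refine neRed_sd_union (fun τ hτ => (mem_filter.1 hτ).2) fun σ hσ => ?_
  obtain ⟨hσC, hvσ, hσv⟩ := mem_filter.1 hσ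
  refine ⟨hvσ, mem_filter.2 ⟨(hC σ hσC).2 _ (erase_subset v σ)
    ((erase_nonempty hvσ).2 ((nontrivial_iff_ne_singleton hvσ).2 hσv)), notMem_erase v σ⟩⟩

def verts (C : Finset (Finset ℕ)) : Finset ℕ := C.biUnion id

def mapV (f : ℕ → ℕ) (C : Finset (Finset ℕ)) : Finset (Finset ℕ) := C.image (image f)

def Isomorphic (C D : Finset (Finset ℕ)) : Prop :=
  ∃ f : ℕ → ℕ, Set.InjOn f (verts C) ∧ mapV f C = D

section Relabelling

variable {C : Finset (Finset ℕ)} {f : ℕ → ℕ} {v : ℕ}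

theorem subset_verts {σ : Finset ℕ} (hσ : σ ∈ C) : σ ⊆ verts C :=
  subset_biUnion_of_mem id hσ

theorem verts_mono {D : Finset (Finset ℕ)} (h : C ⊆ D) : verts C ⊆ verts D :=
  biUnion_subset_biUnion_of_subset_left id h

theorem mapV_delv (hf : Set.InjOn f (verts C)) (hv : v ∈ verts C) :
    mapV f (delv v C) = delv (f v) (mapV f C) := by
  ext ρ
  simp only [mapV, delv, mem_image, mem_filter]
  constructor
  · rintro ⟨σ, ⟨hσC, hvσ⟩, rfl⟩
    refine ⟨⟨σ, hσC, rfl⟩, fun h => hvσ ?_⟩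
    exact_mod_cast hf.mem_of_mem_image (coe_subset.2 (subset_verts hσC)) hv (by simpa using h)
  · rintro ⟨⟨σ, hσC, rfl⟩, hfv⟩
    exact ⟨σ, ⟨hσC, fun h => hfv (mem_image_of_mem f h)⟩, rfl⟩

theorem mapV_lkv (hf : Set.InjOn f (verts C)) (hv : v ∈ verts C) :
    mapV f (lkv v C) = lkv (f v) (mapV f C) := by
  ext ρ
  simp only [mapV, lkv, mem_image, mem_filter]
  constructor
  · rintro ⟨σ, ⟨hσC, hvσ, hins⟩, rfl⟩
    refine ⟨⟨σ, hσC, rfl⟩, fun h => hvσ ?_, insert v σ, hins, image_insert _ _ _⟩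
    exact_mod_cast hf.mem_of_mem_image (coe_subset.2 (subset_verts hσC)) hv (by simpa using h)
  · rintro ⟨⟨σ, hσC, rfl⟩, hfv, τ, hτC, hτ⟩
    have hvσ : v ∉ σ := fun h => hfv (mem_image_of_mem f h)
    obtain rfl : τ = insert v σ := by
      rw [← image_insert] at hτ
      exact (image_eq_image_iff_of_injOn hf (subset_verts hτC)
        (insert_subset hv (subset_verts hσC))).1 hτ
    exact ⟨σ, ⟨hσC, hvσ, hτC⟩, rfl⟩

theorem NonEvasive.mapV (h : NonEvasive C) (hf : Set.InjOn f (verts C)) :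
    NonEvasive (mapV f C) := by
  induction h generalizing f with
  | point v => simpa [mapV] using NonEvasive.point (f v)
  | step C v hv hlk hdel ihlk ihdel =>
    have hvC : v ∈ verts C := subset_verts hv (mem_singleton_self v)
    refine NonEvasive.step _ (f v) (by simpa [mapV] using mem_image_of_mem (image f) hv) ?_ ?_
    · rw [← mapV_lkv hf hvC]
      exact ihlk (hf.mono (coe_subset.2 (verts_mono (filter_subset _ _))))
    · rw [← mapV_delv hf hvC]
      exact ihdel (hf.mono (coe_subset.2 (verts_mono (filter_subset _ _))))

end Relabelling

theorem Isomorphic.nonEvasive {C D : Finset (Finset ℕ)} (h : Isomorphic C D) (hC : NonEvasive C) :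
    NonEvasive D := by
  obtain ⟨f, hf, rfl⟩ := h
  exact hC.mapV hf

theorem Isomorphic.trans {C D E : Finset (Finset ℕ)} (hCD : Isomorphic C D)
    (hDE : Isomorphic D E) : Isomorphic C E := by
  obtain ⟨f, hf, rfl⟩ := hCD
  obtain ⟨g, hg, rfl⟩ := hDE
  refine ⟨g ∘ f, hg.comp hf fun x hx => ?_, by simp [mapV, image_image, Function.comp_def]⟩
  obtain ⟨σ, hσ, hxσ⟩ := mem_biUnion.1 (mem_coe.1 hx)
  exact subset_verts (mem_image_of_mem (image f) hσ) (mem_image_of_mem f hxσ)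

theorem mem_verts_sd {A : Finset (Finset ℕ)} {x : ℕ} : x ∈ verts (sd A) ↔ ∃ σ ∈ A, fenc σ = x := by
  simp only [verts, mem_biUnion, id, mem_sd]
  constructor
  · rintro ⟨T, ⟨S, hSA, -, -, rfl⟩, hx⟩
    obtain ⟨σ, hσ, rfl⟩ := mem_image.1 hx
    exact ⟨σ, hSA hσ, rfl⟩
  · rintro ⟨σ, hσ, rfl⟩
    exact ⟨_, mem_sd.1 (singleton_fenc_mem_sd hσ), mem_singleton_self _⟩

theorem isomorphic_sd_image {A : Finset (Finset ℕ)} (h : Finset ℕ → Finset ℕ)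
    (hh : ∀ σ ∈ A, ∀ τ ∈ A, h σ ⊆ h τ ↔ σ ⊆ τ) : Isomorphic (sd A) (sd (A.image h)) := by
  have hinj : Set.InjOn h A := fun σ hσ τ hτ e =>
    subset_antisymm ((hh σ hσ τ hτ).1 e.le) ((hh τ hτ σ hσ).1 e.ge)
  set g : ℕ → ℕ := fenc ∘ h ∘ Function.invFun fenc
  have hg : ∀ σ, g (fenc σ) = fenc (h σ) := fun σ => by
    simp only [g, Function.comp_apply, Function.leftInverse_invFun fenc_injective σ]
  have hchain : ∀ S ⊆ A, IsChain (· ⊆ ·) (S.image h : Set (Finset ℕ)) ↔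
      IsChain (· ⊆ ·) (S : Set (Finset ℕ)) := fun S hS => by
    rw [IsChain, IsChain, coe_image, (hinj.mono (coe_subset.2 hS)).pairwise_image]
    refine forall₂_congr fun σ hσ => forall₂_congr fun τ hτ => ?_
    simp only [Function.onFun, hh σ (hS hσ) τ (hS hτ), hh τ (hS hτ) σ (hS hσ)]
  refine ⟨g, fun x hx y hy hxy => ?_, ?_⟩
  · obtain ⟨σ, hσ, rfl⟩ := mem_verts_sd.1 hx
    obtain ⟨τ, hτ, rfl⟩ := mem_verts_sd.1 hy
    rw [hg, hg] at hxy
    rw [hinj hσ hτ (fenc_injective hxy)]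
  · ext T
    simp only [mapV, mem_image, mem_sd, subset_image_iff]
    constructor
    · rintro ⟨_, ⟨S, hSA, hne, hch, rfl⟩, rfl⟩
      refine ⟨_, ⟨S, hSA, rfl⟩, hne.image h, (hchain S hSA).2 hch, ?_⟩
      simp only [image_image, Function.comp_def, hg]
    · rintro ⟨_, ⟨S, hSA, rfl⟩, hne, hch, rfl⟩
      refine ⟨_, ⟨S, hSA, hne.of_image, (hchain S hSA).1 hch, rfl⟩, ?_⟩
      simp only [image_image, Function.comp_def, hg]

theorem Isomorphic.sd {C D : Finset (Finset ℕ)} (h : Isomorphic C D) :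
    Isomorphic (sd C) (sd D) := by
  obtain ⟨f, hf, rfl⟩ := h
  exact isomorphic_sd_image (image f) fun σ hσ τ hτ =>
    image_subset_image_iff_of_injOn hf (subset_verts hσ) (subset_verts hτ)

theorem isomorphic_sd_lkv {C : Finset (Finset ℕ)} (hC : IsComplex C) {v : ℕ} (hv : {v} ∈ C) :
    Isomorphic (sd (lkv v C)) (lkv (fenc {v}) (sd C)) := by
  have hstar : C.filter (fun τ => τ ≠ {v} ∧ (τ ⊆ {v} ∨ {v} ⊆ τ)) = (lkv v C).image (insert v) := by
    ext τ
    simp only [mem_filter, mem_image, lkv, subset_singleton_iff, singleton_subset_iff]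
    constructor
    · rintro ⟨hτC, hτv, (rfl | rfl) | hvτ⟩
      · exact absurd (hC _ hτC).1 not_nonempty_empty
      · exact absurd rfl hτv
      · refine ⟨τ.erase v, ⟨(hC τ hτC).2 _ (erase_subset v τ) ?_, notMem_erase v τ, ?_⟩,
          insert_erase hvτ⟩
        · exact (erase_nonempty hvτ).2 ((nontrivial_iff_ne_singleton hvτ).2 hτv)
        · rwa [insert_erase hvτ]
    · rintro ⟨σ, ⟨hσC, hvσ, hins⟩, rfl⟩
      refine ⟨hins, fun h => ?_, Or.inr (mem_insert_self v σ)⟩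
      obtain ⟨x, hx⟩ := (hC σ hσC).1
      exact hvσ (mem_singleton.1 (h ▸ mem_insert_of_mem hx) ▸ hx)
  rw [lkv_fenc_sd hv, hstar]
  refine isomorphic_sd_image (insert v) fun σ hσ τ hτ => ?_
  rw [insert_subset_insert_iff (mem_filter.1 hσ).2.1]

theorem nonEvasive_sd {C : Finset (Finset ℕ)} (h : NonEvasive C) (hC : IsComplex C) :
    NonEvasive (sd C) := by
  induction h with
  | point v =>
    have : sd {{v}} = {{fenc {v}}} := by
      ext T
      simp [mem_sd, subset_singleton_iff, eq_comm]
    exact this ▸ NonEvasive.point _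
  | step C v hv hlk hdel ihlk ihdel =>
    exact NonEvasive.step _ (fenc {v}) (singleton_fenc_mem_sd hv)
      ((isomorphic_sd_lkv hC hv).nonEvasive (ihlk (hC.lkv v)))
      ((neRed_delv_singleton_sd hC v).nonEvasive (ihdel (hC.delv v)))

theorem NEStep.sd {C C' : Finset (Finset ℕ)} (hC : IsComplex C) (h : NEStep C C') :
    NERed (sd C) (sd C') := by
  obtain ⟨v, hv, hlk, rfl⟩ := h
  refine Relation.ReflTransGen.head ⟨fenc {v}, singleton_fenc_mem_sd hv, ?_, rfl⟩
    (neRed_delv_singleton_sd hC v)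
  exact (isomorphic_sd_lkv hC hv).nonEvasive (nonEvasive_sd hlk (hC.lkv v))

theorem NEStep.isComplex {C C' : Finset (Finset ℕ)} (h : NEStep C C') (hC : IsComplex C) :
    IsComplex C' := by
  obtain ⟨v, -, -, rfl⟩ := h
  exact hC.delv v

theorem NERed.sd {C C' : Finset (Finset ℕ)} (hC : IsComplex C) (h : NERed C C') :
    NERed (sd C) (sd C') := by
  induction h using Relation.ReflTransGen.head_induction_on with
  | refl => exact .refl
  | head hstep _ ih => exact (hstep.sd hC).trans (ih (hstep.isComplex hC))

theorem isComplex_sd_iterate {C : Finset (Finset ℕ)} (hC : IsComplex C) (m : ℕ) :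
    IsComplex (sd^[m] C) := by
  cases m with
  | zero => exact hC
  | succ m => rw [Function.iterate_succ_apply']; exact isComplex_sd _

theorem singleton_vIter_mem_sd_iterate {C : Finset (Finset ℕ)} {v : ℕ} (hv : {v} ∈ C) (m : ℕ) :
    {vIter m v} ∈ sd^[m] C := by
  induction m with
  | zero => exact hv
  | succ m ih => rw [Function.iterate_succ_apply']; exact singleton_fenc_mem_sd ih

theorem isomorphic_sd_iterate_lkv {C : Finset (Finset ℕ)} (hC : IsComplex C) {v : ℕ}
    (hv : {v} ∈ C) (m : ℕ) : Isomorphic (sd^[m] (lkv v C)) (lkv (vIter m v) (sd^[m] C)) := by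
  induction m with
  | zero => exact ⟨id, Set.injOn_id _, by ext; simp [mapV, vIter]⟩
  | succ m ih =>
    rw [Function.iterate_succ_apply', Function.iterate_succ_apply']
    exact ih.sd.trans (isomorphic_sd_lkv (isComplex_sd_iterate hC m)
      (singleton_vIter_mem_sd_iterate hv m))

theorem neRed_delv_vIter_sd_iterate {C : Finset (Finset ℕ)} (hC : IsComplex C) (v m : ℕ) :
    NERed (delv (vIter m v) (sd^[m] C)) (sd^[m] (delv v C)) := by
  induction m with
  | zero => exact .refl
  | succ m ih =>
    rw [Function.iterate_succ_apply', Function.iterate_succ_apply']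
    exact (neRed_delv_singleton_sd (isComplex_sd_iterate hC m) _).trans
      (ih.sd ((isComplex_sd_iterate hC m).delv _))

theorem singleton_mem_of_nonEvasive_sd_iterate_lkv {C : Finset (Finset ℕ)} (hC : IsComplex C)
    {v m : ℕ} (h : NonEvasive (sd^[m] (lkv v C))) : {v} ∈ C := by
  refine singleton_mem_of_lkv_nonempty hC (nonempty_iff_ne_empty.2 fun hlk => ?_)
  have := h.nonempty
  rw [hlk, Function.iterate_fixed sd_empty] at this
  exact not_nonempty_empty this

theorem sd_iterate_deletion_general (C : Finset (Finset ℕ)) (hC : IsComplex C)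
    (v : ℕ) (m : ℕ) :
    NERed (delv (vIter m v) (sd^[m] C)) (sd^[m] (delv v C)) ∧
      (NonEvasive (sd^[m] (lkv v C)) → NERed (sd^[m] C) (sd^[m] (delv v C))) := by
  refine ⟨neRed_delv_vIter_sd_iterate hC v m, fun hlk => ?_⟩
  have hv := singleton_mem_of_nonEvasive_sd_iterate_lkv hC hlk
  refine Relation.ReflTransGen.head ⟨vIter m v, singleton_vIter_mem_sd_iterate hv m, ?_, rfl⟩
    (neRed_delv_vIter_sd_iterate hC v m)
  exact (isomorphic_sd_iterate_lkv hC hv m).nonEvasive hlk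

/-- **Deletion and derived subdivision.** For a simplicial complex `C`, a vertex `v` of `C`
and `m ≥ 0`, the deletion of (the vertex corresponding to) `v` from the `m`-th derived
subdivision reduces by non-evasiveness steps to the `m`-th derived subdivision of the deletion:
`(sd^m C) − v ↘_NE sd^m (C − v)`.  Consequently, if `sd^m Lk(v,C)` is non-evasive, then
`sd^m C ↘_NE sd^m (C − v)`. -/
theorem sd_iterate_deletion (C : Finset (Finset ℕ)) (hC : IsComplex C)
    (v : ℕ) (hv : ({v} : Finset ℕ) ∈ C) (m : ℕ) :
    NERed (delv (vIter m v) (sd^[m] C)) (sd^[m] (delv v C)) ∧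
      (NonEvasive (sd^[m] (lkv v C)) → NERed (sd^[m] C) (sd^[m] (delv v C))) :=
  sd_iterate_deletion_general C hC v m
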